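/- arXiv:1203.1742 — 2 statements merged into one kernel-verified Lean document; each statement's English description precedes it below -/
import Mathlib

section
/- Let ε > 0. For (x,y) ∈ D(1) with α = α(x,y) satisfying α > 3/4 + ε/3, and C ≥ x, one has ∑_{q ≤ C^{1/4}} (φ(q₀)/φ(q₁))·q₀^{−1−α+ε/3} ≪_ε C^{ε/3}, where each q is written uniquely as q = q₀q₁ with P⁺(q₀) ≤ y and P⁻(q₁) > y. -/
namespace Friable

open scoped Classical BigOperators

noncomputable section

/-- All prime factors of `n` are at most `y` (i.e. `P⁺(n) ≤ y`). -/
def SmoothNum (y : ℝ) (n : ℕ) : Prop := ∀ p : ℕ, p.Prime → p ∣ n → (p : ℝ) ≤ y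

/-- `Ψ(x,y)`: the number of `y`-smooth integers in `[1,x]`. -/
def Psi (x y : ℝ) : ℕ := ((Finset.Icc 1 ⌊x⌋₊).filter fun n => SmoothNum y n).card

/-- `a` is the (positive) saddle point `α(x,y)`:
`∑_{p ≤ y} log p / (p^a - 1) = log x`. -/
def SaddleEq (x y a : ℝ) : Prop :=
  0 < a ∧
    ∑ p ∈ (Finset.range (⌊y⌋₊ + 1)).filter Nat.Prime,
      Real.log p / ((p : ℝ) ^ a - 1) = Real.log x

/-- `H(u) = exp(u / (log(u+1))²)`. -/
def Hfun (u : ℝ) : ℝ := Real.exp (u / (Real.log (u + 1)) ^ 2)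

/-- The domain `D(κ)`: `2 ≤ (log x)^κ ≤ y ≤ x`. -/
def Dom (κ x y : ℝ) : Prop :=
  2 ≤ (Real.log x) ^ κ ∧ (Real.log x) ^ κ ≤ y ∧ y ≤ x

/-- The domain `D*(κ,c₀)`: `D(κ)` together with `(log y)·H(u)^{-c₀} ≤ 1`. -/
def DomStar (κ c₀ x y : ℝ) : Prop :=
  Dom κ x y ∧ Real.log y * Hfun (Real.log x / Real.log y) ^ (-c₀) ≤ 1

/-- The Generalised Riemann Hypothesis: RH for `ζ` together with the statement that
all zeros of Dirichlet L-functions in the critical strip lie on the critical line. -/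
def GRH : Prop :=
  RiemannHypothesis ∧
    ∀ (N : ℕ) [NeZero N] (χ : DirichletCharacter ℂ N) (s : ℂ),
      0 < s.re → s.re < 1 → DirichletCharacter.LFunction χ s = 0 → s.re = 1 / 2

/-- `e(t) = exp(2πit)`. -/
def eC (t : ℝ) : ℂ := Complex.exp (2 * Real.pi * Complex.I * t)

/-- The singular integral `𝔖₀(Φ,α)` (complex-valued weight). -/
def S0 (Φ : ℝ → ℂ) (a : ℝ) : ℂ :=
  (a : ℂ) ^ 3 *
    ∫ t : ℝ × ℝ in Set.Ioi (0:ℝ) ×ˢ Set.Ioi (0:ℝ),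
      Φ t.1 * Φ t.2 * Φ (t.1 + t.2) * (((t.1 * t.2 * (t.1 + t.2)) ^ (a - 1) : ℝ) : ℂ)

/-- The singular integral `𝔖₀(Φ,α)` (real-valued weight). -/
def S0R (Φ : ℝ → ℝ) (a : ℝ) : ℝ :=
  a ^ 3 *
    ∫ t : ℝ × ℝ in Set.Ioi (0:ℝ) ×ˢ Set.Ioi (0:ℝ),
      Φ t.1 * Φ t.2 * Φ (t.1 + t.2) * (t.1 * t.2 * (t.1 + t.2)) ^ (a - 1)

/-- The indicator function of `(0,1]`. -/
def ind : ℝ → ℝ := Set.indicator (Set.Ioc (0:ℝ) 1) fun _ => 1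

/-- The singular series `𝔖₁(α)`. -/
def S1 (a : ℝ) : ℝ :=
  ∏' p : Nat.Primes,
    (1 + ((p.1 : ℝ) - 1) / ((p.1 : ℝ) * ((p.1 : ℝ) ^ (3 * a - 1) - 1)) *
      (((p.1 : ℝ) - (p.1 : ℝ) ^ a) / ((p.1 : ℝ) - 1)) ^ 3)

/-- `N(x,y;Φ)`: smoothly weighted count of `y`-smooth solutions of `a + b = c`. -/
def NW (x y : ℝ) (Φ : ℝ → ℂ) : ℂ :=
  ∑' ab : ℕ × ℕ,
    if SmoothNum y (ab.1 * ab.2 * (ab.1 + ab.2)) then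
      Φ (ab.1 / x) * Φ (ab.2 / x) * Φ ((ab.1 + ab.2) / x)
    else 0

/-- `N*(x,y;Φ)`: weighted count of primitive `y`-smooth solutions of `a + b = c`. -/
def NWstar (x y : ℝ) (Φ : ℝ → ℂ) : ℂ :=
  ∑' ab : ℕ × ℕ,
    if SmoothNum y (ab.1 * ab.2 * (ab.1 + ab.2)) ∧
        Nat.gcd (Nat.gcd ab.1 ab.2) (ab.1 + ab.2) = 1 then
      Φ (ab.1 / x) * Φ (ab.2 / x) * Φ ((ab.1 + ab.2) / x)
    else 0

/-- `N(x,y)`: the number of `y`-smooth solutions of `a+b=c` with `a,b,c ∈ S(x,y)`. -/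
def Ncount (x y : ℝ) : ℕ :=
  (((Finset.Icc 1 ⌊x⌋₊) ×ˢ (Finset.Icc 1 ⌊x⌋₊) ×ˢ (Finset.Icc 1 ⌊x⌋₊)).filter
    fun t => SmoothNum y t.1 ∧ SmoothNum y t.2.1 ∧ SmoothNum y t.2.2 ∧ t.1 + t.2.1 = t.2.2).card

/-- `N*(x,y)`: the number of primitive `y`-smooth solutions of `a+b=c`. -/
def NcountStar (x y : ℝ) : ℕ :=
  (((Finset.Icc 1 ⌊x⌋₊) ×ˢ (Finset.Icc 1 ⌊x⌋₊) ×ˢ (Finset.Icc 1 ⌊x⌋₊)).filter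
    fun t => SmoothNum y t.1 ∧ SmoothNum y t.2.1 ∧ SmoothNum y t.2.2 ∧
      Nat.gcd (Nat.gcd t.1 t.2.1) t.2.2 = 1 ∧ t.1 + t.2.1 = t.2.2).card

/-- `ζ(s,y) = ∑_{P⁺(n) ≤ y} n^{-s}` (complex `s`). -/
def zetaC (s : ℂ) (y : ℝ) : ℂ := ∑' n : ℕ, if SmoothNum y n then (n : ℂ) ^ (-s) else 0

/-- `ζ(s,y) = ∏_{p ≤ y} (1 - p^{-s})⁻¹` (real `s`). -/
def zetaR (s y : ℝ) : ℝ :=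
  ∏ p ∈ (Finset.range (⌊y⌋₊ + 1)).filter Nat.Prime, (1 - (p : ℝ) ^ (-s))⁻¹

/-- `ζ(s,y) = ∏_{p ≤ y} (1 - p^{-s})⁻¹` (complex `s`). -/
def zetaCprod (s : ℂ) (y : ℝ) : ℂ :=
  ∏ p ∈ (Finset.range (⌊y⌋₊ + 1)).filter Nat.Prime, (1 - (p : ℂ) ^ (-s))⁻¹

/-- The exponential sum `E_Φ(x,y;ϑ)`. -/
def EPhi (Φ : ℝ → ℂ) (x y ϑ : ℝ) : ℂ :=
  ∑' n : ℕ, if SmoothNum y n then eC (n * ϑ) * Φ (n / x) else 0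

/-- The main term `M_Φ(x,y;q,β)`. -/
def MPhi (Φ : ℝ → ℂ) (x y : ℝ) (q : ℕ) (β : ℝ) : ℂ :=
  ∑' n : ℕ,
    if SmoothNum y n then
      ((ArithmeticFunction.moebius (q / Nat.gcd q n) : ℤ) : ℂ) /
          (Nat.totient (q / Nat.gcd q n) : ℂ) * eC (n * β) * Φ (n / x)
    else 0

/-- The Fourier–Mellin transform `Φ̌(λ,s) = ∫₀^∞ Φ(t) e(λt) t^{s-1} dt`. -/
def FM (Φ : ℝ → ℂ) (lam : ℝ) (s : ℂ) : ℂ :=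
  ∫ t in Set.Ioi (0:ℝ), Φ t * eC (lam * t) * (t : ℂ) ^ (s - 1)

/-- The model main term `M̃_Φ(x,y;q₀,β)`. -/
def MTilde (Φ : ℝ → ℂ) (x y : ℝ) (q₀ : ℕ) (β a : ℝ) : ℂ :=
  (a : ℂ) * (((q₀ : ℝ) ^ (-a) : ℝ) : ℂ) *
    (∏ p ∈ q₀.primeFactors, ((1 : ℂ) - ((((p : ℝ) ^ a - 1) / ((p : ℝ) - 1) : ℝ) : ℂ))) *
    FM Φ (β * x) (a : ℂ) * (Psi x y : ℂ)

/-- `N(A,B,C,y;Φ)`: weighted count with three different scaling parameters. -/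
def NW3 (A B C y : ℝ) (Φ : ℝ → ℂ) : ℂ :=
  ∑' ab : ℕ × ℕ,
    if SmoothNum y (ab.1 * ab.2 * (ab.1 + ab.2)) then
      Φ (ab.1 / A) * Φ (ab.2 / B) * Φ ((ab.1 + ab.2) / C)
    else 0

/-- The singular integral `𝔖₀(Φ; A,B,C,y)`. -/
def S0gen (Φ : ℝ → ℂ) (A B C aA aB aC : ℝ) : ℂ :=
  ((aA * aB * aC : ℝ) : ℂ) *
    ∫ t : ℝ × ℝ in Set.Ioi (0:ℝ) ×ˢ Set.Ioi (0:ℝ),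
      Φ t.1 * Φ t.2 * Φ (A / C * t.1 + B / C * t.2) *
        (((t.1 ^ (aA - 1) * t.2 ^ (aB - 1) *
          (A / C * t.1 + B / C * t.2) ^ (aC - 1) : ℝ)) : ℂ)

/-- The singular series `𝔖₁(A,B,C,y)`. -/
def S1gen (aA aB aC : ℝ) : ℝ :=
  ∏' p : Nat.Primes,
    (1 + ((p.1 : ℝ) - 1) * ((p.1 : ℝ) - (p.1 : ℝ) ^ aA) * ((p.1 : ℝ) - (p.1 : ℝ) ^ aB) *
        ((p.1 : ℝ) - (p.1 : ℝ) ^ aC) /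
      ((p.1 : ℝ) * ((p.1 : ℝ) ^ (aA + aB + aC - 1) - 1) * ((p.1 : ℝ) - 1) ^ 3))

/-- The smooth-truncated Dirichlet L-function `L(s,χ;y) = ∑_{P⁺(n) ≤ y} χ(n) n^{-s}`. -/
def Lsm {q : ℕ} (χ : DirichletCharacter ℂ q) (s : ℂ) (y : ℝ) : ℂ :=
  ∑' n : ℕ, if SmoothNum y n then χ (n : ZMod q) * (n : ℂ) ^ (-s) else 0

/-- The `y`-smooth part `q₀` of `q` (product of prime powers with `p ≤ y`). -/
def smoothPart (y : ℝ) (q : ℕ) : ℕ :=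
  ∏ p ∈ q.primeFactors.filter (fun p : ℕ => (p : ℝ) ≤ y), p ^ q.factorization p

/-- The `y`-rough part `q₁` of `q` (so that `q = q₀ q₁`). -/
def roughPart (y : ℝ) (q : ℕ) : ℕ := q / smoothPart y q

/-!
Write `q = q₀q₁`. Since `φ(q₀) ≤ q₀` and `n ≤ τ(n) φ(n)` (sum `φ(d) ≤ φ(n)` over `d ∣ n`), the
term of `q` is at most `q₀^{ε/3} · q₀^{-α} · τ(q₁)/q₁`, and as `q ↦ (q₀, q₁)` is injective the sum
is at most `C^{ε/12}` times `∑_{P⁺(m) ≤ y} m^{-α}` times `∑_{n ≤ C^{1/4}} τ(n)/n`. The last factor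
is at most `(∑_{n ≤ C^{1/4}} 1/n)² ≪_ε C^{ε/6}`. The middle one is at most the Euler product
`∏_{p ≤ y} (1 - p^{-α})⁻¹ ≤ exp (4 ∑_{p ≤ y} p^{-α})`, using `α ≥ 1/2`. For `p > e^L` we have
`p^{-α} ≤ L⁻¹ log p / (p^α - 1)`, so the saddle-point equation gives
`∑_{p ≤ y} p^{-α} ≤ e^L + L⁻¹ log x`; with `L = 48/ε` the Euler product is `≪_ε x^{ε/12}`.
-/

open Finset

theorem le_card_divisors_mul_totient (n : ℕ) : n ≤ #n.divisors * n.totient := by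
  rcases n.eq_zero_or_pos with rfl | hn
  · exact Nat.zero_le _
  calc n = ∑ d ∈ n.divisors, d.totient := (Nat.sum_totient n).symm
    _ ≤ ∑ _d ∈ n.divisors, n.totient := sum_le_sum fun d hd =>
        Nat.le_of_dvd (Nat.totient_pos.mpr hn) (Nat.totient_dvd_of_dvd (Nat.dvd_of_mem_divisors hd))
    _ = #n.divisors * n.totient := by rw [sum_const, smul_eq_mul]

theorem totient_div_totient_mul_rpow_le {m n : ℕ} (hn : 0 < n) (c : ℝ) :
    (m.totient : ℝ) / n.totient * (m : ℝ) ^ (c - 1) ≤ (m : ℝ) ^ c * (#n.divisors / n) := by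
  rcases m.eq_zero_or_pos with rfl | hm
  · simp only [Nat.totient_zero, Nat.cast_zero, zero_div, zero_mul]
    positivity
  have hφm : (m.totient : ℝ) * (m : ℝ) ^ (c - 1) ≤ (m : ℝ) ^ c := by
    calc (m.totient : ℝ) * (m : ℝ) ^ (c - 1) ≤ m * (m : ℝ) ^ (c - 1) := by
          gcongr; exact_mod_cast Nat.totient_le m
      _ = (m : ℝ) ^ c := by
          rw [Real.rpow_sub_one (by positivity), mul_div_cancel₀ _ (by positivity)]
  have hφn : (1 : ℝ) / n.totient ≤ #n.divisors / n := by
    rw [div_le_div_iff₀ (by exact_mod_cast Nat.totient_pos.mpr hn) (by exact_mod_cast hn), one_mul]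
    exact_mod_cast le_card_divisors_mul_totient n
  calc (m.totient : ℝ) / n.totient * (m : ℝ) ^ (c - 1)
      = (m.totient * (m : ℝ) ^ (c - 1)) * (1 / n.totient) := by ring
    _ ≤ (m : ℝ) ^ c * (#n.divisors / n) := by gcongr

theorem card_divisors_div_eq_sum (n : ℕ) :
    (#n.divisors : ℝ) / n = ∑ u ∈ n.divisorsAntidiagonal, (u.1 : ℝ)⁻¹ * (u.2 : ℝ)⁻¹ := by
  rw [Nat.sum_divisorsAntidiagonal (fun u v => (u : ℝ)⁻¹ * (v : ℝ)⁻¹), div_eq_mul_inv,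
    ← nsmul_eq_mul, ← sum_const]
  refine sum_congr rfl fun d hd => ?_
  rw [← mul_inv, ← Nat.cast_mul, Nat.mul_div_cancel' (Nat.dvd_of_mem_divisors hd)]

theorem sum_card_divisors_div_le_sq_harmonic (Q : ℕ) :
    ∑ n ∈ Icc 1 Q, (#n.divisors : ℝ) / n ≤ (harmonic Q : ℝ) ^ 2 := by
  have hdisj : (Icc 1 Q : Set ℕ).PairwiseDisjoint Nat.divisorsAntidiagonal :=
    fun m _ n _ hmn => disjoint_left.mpr fun u hum hun =>
      hmn ((Nat.mem_divisorsAntidiagonal.mp hum).1.symm.trans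
        (Nat.mem_divisorsAntidiagonal.mp hun).1)
  have hsub : (Icc 1 Q).biUnion Nat.divisorsAntidiagonal ⊆ Icc 1 Q ×ˢ Icc 1 Q := by
    intro u hu
    obtain ⟨n, hn, hun⟩ := mem_biUnion.mp hu
    have hnQ := (mem_Icc.mp hn).2
    have h1 := Nat.fst_mem_divisors_of_mem_antidiagonal hun
    have h2 := Nat.snd_mem_divisors_of_mem_antidiagonal hun
    exact mem_product.mpr ⟨mem_Icc.mpr ⟨Nat.pos_of_mem_divisors h1, (Nat.divisor_le h1).trans hnQ⟩,
      mem_Icc.mpr ⟨Nat.pos_of_mem_divisors h2, (Nat.divisor_le h2).trans hnQ⟩⟩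
  calc ∑ n ∈ Icc 1 Q, (#n.divisors : ℝ) / n
      = ∑ u ∈ (Icc 1 Q).biUnion Nat.divisorsAntidiagonal, (u.1 : ℝ)⁻¹ * (u.2 : ℝ)⁻¹ := by
        rw [sum_biUnion hdisj]
        exact sum_congr rfl fun n _ => card_divisors_div_eq_sum n
    _ ≤ ∑ u ∈ Icc 1 Q ×ˢ Icc 1 Q, (u.1 : ℝ)⁻¹ * (u.2 : ℝ)⁻¹ :=
        sum_le_sum_of_subset_of_nonneg hsub fun _ _ _ => by positivity
    _ = (harmonic Q : ℝ) ^ 2 := by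
        rw [harmonic_eq_sum_Icc]
        push_cast
        rw [sq, sum_mul_sum, sum_product]

theorem harmonic_le_mul_rpow (Q : ℕ) {δ : ℝ} (hδ : 0 < δ) :
    (harmonic Q : ℝ) ≤ (1 + δ⁻¹) * (Q : ℝ) ^ δ := by
  rcases Q.eq_zero_or_pos with rfl | hQ
  · simp [Real.zero_rpow hδ.ne']
  have hQδ : 1 ≤ (Q : ℝ) ^ δ := Real.one_le_rpow (by exact_mod_cast hQ) hδ.le
  calc (harmonic Q : ℝ) ≤ 1 + Real.log Q := harmonic_le_one_add_log Q
    _ ≤ (Q : ℝ) ^ δ + (Q : ℝ) ^ δ / δ := add_le_add hQδ (Real.log_le_rpow_div Q.cast_nonneg hδ)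
    _ = (1 + δ⁻¹) * (Q : ℝ) ^ δ := by ring

theorem sum_card_divisors_div_le (Q : ℕ) {δ : ℝ} (hδ : 0 < δ) :
    ∑ n ∈ Icc 1 Q, (#n.divisors : ℝ) / n ≤ (1 + δ⁻¹) ^ 2 * ((Q : ℝ) ^ δ) ^ 2 := by
  rw [← mul_pow]
  refine (sum_card_divisors_div_le_sq_harmonic Q).trans ?_
  have hH : (0 : ℝ) ≤ harmonic Q := by
    rw [harmonic_eq_sum_Icc]
    push_cast
    positivity
  gcongr
  exact harmonic_le_mul_rpow Q hδ

theorem smoothPart_dvd (y : ℝ) (q : ℕ) : smoothPart y q ∣ q := by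
  rcases eq_or_ne q 0 with rfl | hq
  · exact dvd_zero _
  calc smoothPart y q ∣ ∏ p ∈ q.primeFactors, p ^ q.factorization p :=
        prod_dvd_prod_of_subset _ _ _ (filter_subset _ _)
    _ = q := Nat.prod_factorization_pow_eq_self hq

theorem smoothPart_mul_roughPart (y : ℝ) (q : ℕ) : smoothPart y q * roughPart y q = q :=
  Nat.mul_div_cancel' (smoothPart_dvd y q)

theorem smoothPart_pos (y : ℝ) (q : ℕ) : 0 < smoothPart y q :=
  prod_pos fun _ hp => pow_pos (Nat.prime_of_mem_primeFactors (mem_filter.mp hp).1).pos _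

theorem roughPart_pos (y : ℝ) {q : ℕ} (hq : 0 < q) : 0 < roughPart y q :=
  Nat.pos_of_mul_pos_left ((smoothPart_mul_roughPart y q).symm ▸ hq)

theorem smoothNum_smoothPart (y : ℝ) (q : ℕ) : SmoothNum y (smoothPart y q) := by
  intro p hp hdvd
  obtain ⟨r, hr, hpr⟩ := hp.prime.exists_mem_finset_dvd hdvd
  obtain ⟨hr, hry⟩ := mem_filter.mp hr
  rwa [(Nat.prime_dvd_prime_iff_eq hp (Nat.prime_of_mem_primeFactors hr)).mp
    (hp.dvd_of_dvd_pow hpr)]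

theorem sum_smoothPart_mul_roughPart_le (y : ℝ) (Q : ℕ) {f g : ℕ → ℝ} (hf : ∀ m, 0 ≤ f m)
    (hg : ∀ n, 0 ≤ g n) :
    ∑ q ∈ Icc 1 Q, f (smoothPart y q) * g (roughPart y q) ≤
      (∑ m ∈ (Icc 1 Q).filter (SmoothNum y), f m) * ∑ n ∈ Icc 1 Q, g n := by
  have hinj : Set.InjOn (fun q => (smoothPart y q, roughPart y q)) (Icc 1 Q) := by
    intro u _ v _ huv
    simp only [Prod.mk.injEq] at huv
    rw [← smoothPart_mul_roughPart y u, ← smoothPart_mul_roughPart y v, huv.1, huv.2]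
  have hmaps : (Icc 1 Q).image (fun q => (smoothPart y q, roughPart y q)) ⊆
      (Icc 1 Q).filter (SmoothNum y) ×ˢ Icc 1 Q := by
    intro u hu
    obtain ⟨q, hq, rfl⟩ := mem_image.mp hu
    obtain ⟨hq1, hqQ⟩ := mem_Icc.mp hq
    have hdvd₁ : roughPart y q ∣ q := Dvd.intro_left _ (smoothPart_mul_roughPart y q)
    exact mem_product.mpr ⟨mem_filter.mpr ⟨mem_Icc.mpr ⟨smoothPart_pos y q,
      (Nat.le_of_dvd hq1 (smoothPart_dvd y q)).trans hqQ⟩, smoothNum_smoothPart y q⟩,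
      mem_Icc.mpr ⟨roughPart_pos y hq1, (Nat.le_of_dvd hq1 hdvd₁).trans hqQ⟩⟩
  calc ∑ q ∈ Icc 1 Q, f (smoothPart y q) * g (roughPart y q)
      = ∑ u ∈ (Icc 1 Q).image (fun q => (smoothPart y q, roughPart y q)), f u.1 * g u.2 :=
        (sum_image (f := fun u => f u.1 * g u.2) hinj).symm
    _ ≤ ∑ u ∈ (Icc 1 Q).filter (SmoothNum y) ×ˢ Icc 1 Q, f u.1 * g u.2 :=
        sum_le_sum_of_subset_of_nonneg hmaps fun _ _ _ => mul_nonneg (hf _) (hg _)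
    _ = _ := by rw [sum_product, sum_mul_sum]

theorem SmoothNum.mem_smoothNumbers {y : ℝ} {m : ℕ} (h : SmoothNum y m) :
    m ∈ (⌊y⌋₊ + 1).smoothNumbers :=
  Nat.mem_smoothNumbers'.mpr fun p hp hdvd => Nat.lt_succ_of_le (Nat.le_floor (h p hp hdvd))

theorem sum_rpow_neg_le_prod_primesBelow {a : ℝ} (ha : 0 < a) {N : ℕ} {s : Finset ℕ}
    (hs : ∀ m ∈ s, m ∈ N.smoothNumbers) :
    ∑ m ∈ s, (m : ℝ) ^ (-a) ≤ ∏ p ∈ N.primesBelow, (1 - (p : ℝ) ^ (-a))⁻¹ := by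
  let f : ℕ →* ℝ :=
    { toFun := fun n => (n : ℝ) ^ (-a)
      map_one' := by simp
      map_mul' := fun m n => by
        push_cast
        exact Real.mul_rpow m.cast_nonneg n.cast_nonneg }
  have hf : ∀ {p : ℕ}, p.Prime → ‖f p‖ < 1 := fun {p} hp => by
    change ‖(p : ℝ) ^ (-a)‖ < 1
    rw [Real.norm_of_nonneg (Real.rpow_nonneg (Nat.cast_nonneg _) _)]
    exact Real.rpow_lt_one_of_one_lt_of_neg (by exact_mod_cast hp.one_lt) (neg_neg_of_pos ha)
  rw [← sum_subtype_of_mem _ hs]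
  exact sum_le_hasSum _ (fun _ _ => Real.rpow_nonneg (Nat.cast_nonneg _) _)
    (EulerProduct.summable_and_hasSum_smoothNumbers_prod_primesBelow_geometric hf N).2

theorem prod_inv_one_sub_le_exp {ι : Type*} (s : Finset ι) {t : ι → ℝ} (h0 : ∀ i ∈ s, 0 ≤ t i)
    (h1 : ∀ i ∈ s, t i ≤ 3 / 4) :
    ∏ i ∈ s, (1 - t i)⁻¹ ≤ Real.exp (4 * ∑ i ∈ s, t i) := by
  rw [mul_sum, Real.exp_sum]
  refine prod_le_prod (fun i hi => inv_nonneg.mpr (by linarith [h1 i hi])) fun i hi => ?_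
  have hpos : 0 < 1 - t i := by linarith [h1 i hi]
  calc (1 - t i)⁻¹ ≤ 4 * t i + 1 := by
        rw [inv_le_iff_one_le_mul₀ hpos]
        nlinarith [h0 i hi, h1 i hi]
    _ ≤ Real.exp (4 * t i) := Real.add_one_le_exp _

theorem rpow_neg_le_three_quarters {p a : ℝ} (hp : 2 ≤ p) (ha : 1 / 2 ≤ a) :
    p ^ (-a) ≤ 3 / 4 := by
  have hsqrt : (4 / 3 : ℝ) ≤ √2 := Real.le_sqrt_of_sq_le (by norm_num)
  calc p ^ (-a) ≤ p ^ (-(1 / 2) : ℝ) :=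
        Real.rpow_le_rpow_of_exponent_le (by linarith) (by linarith)
    _ ≤ 2 ^ (-(1 / 2) : ℝ) := Real.rpow_le_rpow_of_nonpos (by norm_num) hp (by norm_num)
    _ = (√2)⁻¹ := by rw [Real.rpow_neg (by norm_num), Real.sqrt_eq_rpow]
    _ ≤ 3 / 4 := by rw [inv_le_comm₀ (by positivity) (by norm_num)]; linarith

theorem rpow_neg_le_inv_mul_log_div {p a L : ℝ} (ha : 0 < a) (hL : 0 < L)
    (hp : Real.exp L < p) : p ^ (-a) ≤ L⁻¹ * (Real.log p / (p ^ a - 1)) := by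
  have hp1 : 1 < p := (Real.one_lt_exp_iff.mpr hL).trans hp
  have hpa : 1 < p ^ a := Real.one_lt_rpow hp1 ha
  have hlog : L < Real.log p := (Real.lt_log_iff_exp_lt (by linarith)).mpr hp
  rw [Real.rpow_neg (by linarith), inv_mul_eq_div, le_div_iff₀ hL]
  calc (p ^ a)⁻¹ * L ≤ (p ^ a - 1)⁻¹ * Real.log p := by
        gcongr
        linarith
    _ = Real.log p / (p ^ a - 1) := by ring

theorem sum_rpow_neg_le_exp_add {s : Finset ℕ} (hs : ∀ p ∈ s, 1 < p) {a L : ℝ} (ha : 0 < a)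
    (hL : 0 < L) :
    ∑ p ∈ s, (p : ℝ) ^ (-a) ≤ Real.exp L + L⁻¹ * ∑ p ∈ s, Real.log p / ((p : ℝ) ^ a - 1) := by
  have hw : ∀ p ∈ s, 0 ≤ Real.log p / ((p : ℝ) ^ a - 1) := fun p hp => by
    have hp1 : (1 : ℝ) < p := by exact_mod_cast hs p hp
    have := Real.one_lt_rpow hp1 ha
    exact div_nonneg (Real.log_nonneg hp1.le) (by linarith)
  have hsub : s.filter (fun p : ℕ => (p : ℝ) ≤ Real.exp L) ⊆ Icc 1 ⌊Real.exp L⌋₊ := fun p hp => by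
    obtain ⟨hp, hpL⟩ := mem_filter.mp hp
    exact mem_Icc.mpr ⟨(hs p hp).le, Nat.le_floor hpL⟩
  rw [← sum_filter_add_sum_filter_not s (fun p => (p : ℝ) ≤ Real.exp L), mul_sum]
  gcongr ?_ + ?_
  · calc ∑ p ∈ s.filter (fun p : ℕ => (p : ℝ) ≤ Real.exp L), (p : ℝ) ^ (-a)
        ≤ ∑ _p ∈ s.filter (fun p : ℕ => (p : ℝ) ≤ Real.exp L), (1 : ℝ) :=
          sum_le_sum fun p hp => Real.rpow_le_one_of_one_le_of_nonpos
            (by exact_mod_cast (hs p (mem_filter.mp hp).1).le) (by linarith)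
      _ ≤ ⌊Real.exp L⌋₊ := by
          rw [sum_const, nsmul_one]
          exact_mod_cast (card_le_card hsub).trans (by simp)
      _ ≤ Real.exp L := Nat.floor_le (Real.exp_pos L).le
  · calc ∑ p ∈ s.filter (fun p : ℕ => ¬(p : ℝ) ≤ Real.exp L), (p : ℝ) ^ (-a)
        ≤ ∑ p ∈ s.filter (fun p : ℕ => ¬(p : ℝ) ≤ Real.exp L),
            L⁻¹ * (Real.log p / ((p : ℝ) ^ a - 1)) :=
          sum_le_sum fun p hp => rpow_neg_le_inv_mul_log_div ha hL (not_le.mp (mem_filter.mp hp).2)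
      _ ≤ ∑ p ∈ s, L⁻¹ * (Real.log p / ((p : ℝ) ^ a - 1)) :=
          sum_le_sum_of_subset_of_nonneg (filter_subset _ _) fun p hp _ =>
            mul_nonneg (inv_nonneg.mpr hL.le) (hw p hp)

theorem sum_smooth_rpow_neg_le {x y a L : ℝ} (hx : 0 < x) (hsad : SaddleEq x y a) (ha : 1 / 2 ≤ a)
    (hL : 0 < L) {s : Finset ℕ} (hs : ∀ m ∈ s, SmoothNum y m) :
    ∑ m ∈ s, (m : ℝ) ^ (-a) ≤ Real.exp (4 * Real.exp L) * x ^ (4 / L) := by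
  have ha0 : 0 < a := by linarith
  have hprime : ∀ p ∈ (⌊y⌋₊ + 1).primesBelow, p.Prime := fun _ => Nat.prime_of_mem_primesBelow
  calc ∑ m ∈ s, (m : ℝ) ^ (-a) ≤ ∏ p ∈ (⌊y⌋₊ + 1).primesBelow, (1 - (p : ℝ) ^ (-a))⁻¹ :=
        sum_rpow_neg_le_prod_primesBelow ha0 fun m hm => (hs m hm).mem_smoothNumbers
    _ ≤ Real.exp (4 * ∑ p ∈ (⌊y⌋₊ + 1).primesBelow, (p : ℝ) ^ (-a)) :=
        prod_inv_one_sub_le_exp _ (fun _ _ => Real.rpow_nonneg (Nat.cast_nonneg _) _)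
          fun p hp => rpow_neg_le_three_quarters (by exact_mod_cast (hprime p hp).two_le) ha
    _ ≤ Real.exp (4 * (Real.exp L + L⁻¹ * Real.log x)) := by
        rw [← hsad.2]
        gcongr
        exact sum_rpow_neg_le_exp_add (fun p hp => (hprime p hp).one_lt) ha0 hL
    _ = Real.exp (4 * Real.exp L) * x ^ (4 / L) := by
        rw [Real.rpow_def_of_pos hx, ← Real.exp_add]
        ring_nf

theorem sum_totient_smoothPart_div_totient_roughPart_le (y a : ℝ) {b : ℝ} (hb : 0 ≤ b) (Q : ℕ) :
    ∑ q ∈ Icc 1 Q, ((smoothPart y q).totient : ℝ) / (roughPart y q).totient *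
        (smoothPart y q : ℝ) ^ (-1 - a + b) ≤
      (Q : ℝ) ^ b * ((∑ m ∈ (Icc 1 Q).filter (SmoothNum y), (m : ℝ) ^ (-a)) *
        ∑ n ∈ Icc 1 Q, (#n.divisors : ℝ) / n) := by
  have hterm : ∀ q ∈ Icc 1 Q,
      ((smoothPart y q).totient : ℝ) / (roughPart y q).totient *
          (smoothPart y q : ℝ) ^ (-1 - a + b) ≤
        (Q : ℝ) ^ b * ((smoothPart y q : ℝ) ^ (-a) *
          (#(roughPart y q).divisors / roughPart y q)) := by
    intro q hq
    obtain ⟨hq1, hqQ⟩ := mem_Icc.mp hq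
    have hq0 : 0 < (smoothPart y q : ℝ) := by exact_mod_cast smoothPart_pos y q
    have hq0Q : (smoothPart y q : ℝ) ≤ Q := by
      exact_mod_cast (Nat.le_of_dvd hq1 (smoothPart_dvd y q)).trans hqQ
    calc _ ≤ (smoothPart y q : ℝ) ^ (b - a) * (#(roughPart y q).divisors / roughPart y q) := by
          rw [show -1 - a + b = b - a - 1 by ring]
          exact totient_div_totient_mul_rpow_le (roughPart_pos y hq1) _
      _ = (smoothPart y q : ℝ) ^ b * ((smoothPart y q : ℝ) ^ (-a) *
            (#(roughPart y q).divisors / roughPart y q)) := by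
          rw [sub_eq_add_neg, Real.rpow_add hq0, mul_assoc]
      _ ≤ _ := by gcongr
  calc _ ≤ ∑ q ∈ Icc 1 Q, (Q : ℝ) ^ b * ((smoothPart y q : ℝ) ^ (-a) *
          (#(roughPart y q).divisors / roughPart y q)) := sum_le_sum hterm
    _ = (Q : ℝ) ^ b * ∑ q ∈ Icc 1 Q, (smoothPart y q : ℝ) ^ (-a) *
          (#(roughPart y q).divisors / roughPart y q) := (mul_sum _ _ _).symm
    _ ≤ _ := mul_le_mul_of_nonneg_left (sum_smoothPart_mul_roughPart_le y Q
          (f := fun m => (m : ℝ) ^ (-a)) (g := fun n => (#n.divisors : ℝ) / n)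
          (fun m => Real.rpow_nonneg m.cast_nonneg _) fun n => by positivity) (by positivity)

/-- The bound (3.10): for `(x,y) ∈ D(1)` with `α > 3/4 + ε/3` and `C ≥ x`,
`∑_{q ≤ C^{1/4}} (φ(q₀)/φ(q₁)) q₀^{-1-α+ε/3} ≪_ε C^{ε/3}`, where `q = q₀q₁` with
`P⁺(q₀) ≤ y` and `P⁻(q₁) > y`. -/
theorem sum_smooth_rough_parts (ε : ℝ) (hε : 0 < ε) :
    ∃ K : ℝ, 0 < K ∧ ∀ x y C a : ℝ,
      2 ≤ Real.log x → Real.log x ≤ y → y ≤ x → x ≤ C →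
      SaddleEq x y a → 3 / 4 + ε / 3 < a →
      (∑ q ∈ Finset.Icc 1 ⌊C ^ ((1 : ℝ) / 4)⌋₊,
          (Nat.totient (smoothPart y q) : ℝ) / (Nat.totient (roughPart y q) : ℝ) *
            (smoothPart y q : ℝ) ^ (-1 - a + ε / 3)) ≤ K * C ^ (ε / 3) := by
  refine ⟨Real.exp (4 * Real.exp (48 / ε)) * (1 + 3 / ε) ^ 2, by positivity, ?_⟩
  intro x y C a hlx hxy hyx hxC hsad ha
  have hx : 0 < x := by linarith
  have hC : 0 ≤ C := by linarith
  set Q := ⌊C ^ ((1 : ℝ) / 4)⌋₊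
  have hQ : (Q : ℝ) ^ (ε / 3) ≤ C ^ (ε / 12) := by
    rw [show ε / 12 = 1 / 4 * (ε / 3) by ring, Real.rpow_mul hC]
    gcongr
    exact Nat.floor_le (by positivity)
  have hsmooth : ∑ m ∈ (Icc 1 Q).filter (SmoothNum y), (m : ℝ) ^ (-a) ≤
      Real.exp (4 * Real.exp (48 / ε)) * C ^ (ε / 12) := by
    refine (sum_smooth_rpow_neg_le (L := 48 / ε) hx hsad (by linarith) (by positivity)
      fun m hm => (mem_filter.mp hm).2).trans ?_
    rw [show 4 / (48 / ε) = ε / 12 by field_simp; norm_num]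
    gcongr
  have hdiv : ∑ n ∈ Icc 1 Q, (#n.divisors : ℝ) / n ≤ (1 + 3 / ε) ^ 2 * (C ^ (ε / 12)) ^ 2 := by
    refine (sum_card_divisors_div_le Q (δ := ε / 3) (by positivity)).trans ?_
    rw [inv_div]
    gcongr
  calc _ ≤ (Q : ℝ) ^ (ε / 3) * ((∑ m ∈ (Icc 1 Q).filter (SmoothNum y), (m : ℝ) ^ (-a)) *
          ∑ n ∈ Icc 1 Q, (#n.divisors : ℝ) / n) :=
        sum_totient_smoothPart_div_totient_roughPart_le y a (by positivity) Q
    _ ≤ C ^ (ε / 12) * ((Real.exp (4 * Real.exp (48 / ε)) * C ^ (ε / 12)) *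
          ((1 + 3 / ε) ^ 2 * (C ^ (ε / 12)) ^ 2)) :=
        mul_le_mul hQ (mul_le_mul hsmooth hdiv (sum_nonneg fun _ _ => by positivity)
          (by positivity)) (by positivity) (by positivity)
    _ = Real.exp (4 * Real.exp (48 / ε)) * (1 + 3 / ε) ^ 2 * C ^ (ε / 3) := by
        rw [show ε / 3 = ε / 12 * (4 : ℕ) by push_cast; ring, Real.rpow_mul hC, Real.rpow_natCast]
        ring

end

end Friable
end

section
/- Let y ≥ 2, let q₀ be a positive integer with P⁺(q₀) ≤ y, and let s ∈ ℂ with Re s > 0. Then ζ(s;y,q₀) := ∑_{n : P⁺(n) ≤ y} (μ(q₀/gcd(q₀,n))/φ(q₀/gcd(q₀,n)))·n^{−s} = q₀^{−s}·∏_{p | q₀}(1 − (p^s − 1)/(p − 1))·ζ(s,y). Moreover, for any positive integer q written as q = q₀q₁ with P⁺(q₀) ≤ y and P⁻(q₁) > y, and any compactly supported Φ and β ∈ ℝ, one has M_Φ(x,y;q,β) = (μ(q₁)/φ(q₁))·M_Φ(x,y;q₀,β). -/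
namespace Friable

open scoped Classical BigOperators

noncomputable section

/-!
Hölder's formula `μ(q/(q,n)) φ(q) / φ(q/(q,n)) = ∑_{d ∣ (q,n)} d μ(q/d)` writes the weight of `n`
as a combination of the conditions `d ∣ n`, `d ∣ q₀`. As `q₀` is `y`-smooth, `m ↦ d m` maps the
`y`-smooth numbers onto the `y`-smooth multiples of `d`, so each condition contributes
`d^{-s} ζ(s,y)`, and the remaining divisor sum `∑_{d ∣ q₀} d^{1-s} μ(q₀/d)` is multiplicative in
`q₀`, hence computed on prime powers. For the second identity, a `y`-smooth `n` is coprime to the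
`y`-rough `q₁`, so `q/(q,n) = (q₀/(q₀,n)) q₁` with coprime factors and `μ/φ` splits off `q₁`.
-/

open ArithmeticFunction
open scoped ArithmeticFunction.Moebius

section SmoothNum

variable {y : ℝ} {m n : ℕ}

theorem smoothNum_mul_iff : SmoothNum y (m * n) ↔ SmoothNum y m ∧ SmoothNum y n :=
  ⟨fun h => ⟨fun p hp hd => h p hp (hd.mul_right n), fun p hp hd => h p hp (hd.mul_left m)⟩,
    fun ⟨hm, hn⟩ p hp hd => (hp.dvd_mul.mp hd).elim (hm p hp) (hn p hp)⟩

theorem SmoothNum.of_dvd (h : SmoothNum y n) (hmn : m ∣ n) : SmoothNum y m :=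
  fun p hp hd => h p hp (hd.trans hmn)

theorem smoothNum_iff_mem_smoothNumbers (hy : 0 ≤ y) :
    SmoothNum y n ↔ n ∈ (⌊y⌋₊ + 1).smoothNumbers := by
  simp only [SmoothNum, Nat.mem_smoothNumbers', Nat.lt_add_one_iff, Nat.le_floor_iff hy]

theorem coprime_of_rough_of_smoothNum
    (hrough : ∀ p : ℕ, p.Prime → p ∣ m → y < p) (hn : SmoothNum y n) : m.Coprime n :=
  Nat.coprime_of_dvd fun p hp hm hn' => (hn p hp hn').not_gt (hrough p hp hm)

end SmoothNum

theorem natCast_pow_cpow (p j : ℕ) (s : ℂ) : ((p ^ j : ℕ) : ℂ) ^ s = ((p : ℂ) ^ s) ^ j := by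
  rw [Nat.cast_pow, ← Complex.natCast_cpow_natCast_mul, mul_comm, Complex.cpow_mul_nat]

section Summation

variable {y : ℝ} {s : ℂ}

theorem summable_norm_cpow_smoothNum (hy : 0 ≤ y) (hs : 0 < s.re) :
    Summable fun n : ℕ => if SmoothNum y n then ‖(n : ℂ) ^ (-s)‖ else 0 := by
  have geometric {p : ℕ} (hp : p.Prime) : Summable fun j : ℕ => ‖((p ^ j : ℕ) : ℂ) ^ (-s)‖ := by
    simp only [natCast_pow_cpow, norm_pow]
    refine summable_geometric_of_lt_one (norm_nonneg _) ?_
    rw [Complex.norm_natCast_cpow_of_pos hp.pos, Complex.neg_re]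
    exact Real.rpow_lt_one_of_one_lt_of_neg (by exact_mod_cast hp.one_lt) (by linarith)
  have euler := (EulerProduct.summable_and_hasSum_smoothNumbers_prod_primesBelow_tsum
    (f := fun n : ℕ => (n : ℂ) ^ (-s)) (by simp)
    (fun {m n} _ => by push_cast; exact Complex.natCast_mul_natCast_cpow m n (-s))
    geometric (⌊y⌋₊ + 1)).1
  refine ((summable_subtype_iff_indicator (f := fun n : ℕ => ‖(n : ℂ) ^ (-s)‖)).mp euler).congr
    fun n => ?_
  simp only [Set.indicator, smoothNum_iff_mem_smoothNumbers hy]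

theorem summable_cpow_smoothNum_dvd (hy : 0 ≤ y) (hs : 0 < s.re) (d : ℕ) :
    Summable fun n : ℕ => if SmoothNum y n ∧ d ∣ n then (n : ℂ) ^ (-s) else 0 := by
  refine Summable.of_norm_bounded (summable_norm_cpow_smoothNum hy hs) fun n => ?_
  by_cases h : SmoothNum y n ∧ d ∣ n
  · simp [h]
  · rw [if_neg h, norm_zero]; split_ifs <;> simp

theorem tsum_cpow_smoothNum_dvd {d : ℕ} (hd : d ≠ 0) (hds : SmoothNum y d) :
    ∑' n : ℕ, (if SmoothNum y n ∧ d ∣ n then (n : ℂ) ^ (-s) else 0) =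
      (d : ℂ) ^ (-s) * zetaC s y := by
  rw [zetaC, ← tsum_mul_left, ← (mul_right_injective₀ hd).tsum_eq]
  · congr 1 with m
    by_cases hm : SmoothNum y m
    · simp [hm, hds, smoothNum_mul_iff, Complex.natCast_mul_natCast_cpow]
    · simp [hm, smoothNum_mul_iff]
  · intro n hn
    obtain ⟨-, m, rfl⟩ : SmoothNum y n ∧ d ∣ n := by by_contra h; simp [h] at hn
    exact ⟨m, rfl⟩

end Summation

theorem mul_moebius_apply_prime_pow_succ {R : Type*} [CommRing R]
    (f : ArithmeticFunction R) {p : ℕ} (hp : p.Prime) (k : ℕ) :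
    (f * μ) (p ^ (k + 1)) = f (p ^ (k + 1)) - f (p ^ k) := by
  rw [mul_apply,
    Nat.sum_divisorsAntidiagonal' (f := fun a b => f a * (μ : ArithmeticFunction R) b),
    Nat.sum_divisors_prime_pow hp, Finset.sum_range_succ', Finset.sum_range_succ']
  have hvanish : ∀ i ∈ Finset.range k,
      f (p ^ (k + 1) / p ^ (i + 1 + 1)) * (μ : ArithmeticFunction R) (p ^ (i + 1 + 1)) = 0 :=
    fun i _ => by simp [moebius_apply_prime_pow hp]
  rw [Finset.sum_eq_zero hvanish, Nat.pow_div (by omega) hp.pos, Nat.pow_div (by omega) hp.pos]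
  simp [moebius_apply_prime hp, sub_eq_neg_add]

section Ramanujan

variable {R K : Type*} [Semiring R] [Field K]

def dvdWeight (n : ℕ) : ArithmeticFunction R :=
  ⟨fun d => if d ∣ n then (d : R) else 0, by simp⟩

theorem dvdWeight_apply (n d : ℕ) : dvdWeight n d = if d ∣ n then (d : R) else 0 := rfl

theorem isMultiplicative_dvdWeight (n : ℕ) :
    (dvdWeight n : ArithmeticFunction R).IsMultiplicative := by
  refine ⟨by simp [dvdWeight_apply], fun {a b} hab => ?_⟩
  have hdvd : a * b ∣ n ↔ a ∣ n ∧ b ∣ n :=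
    ⟨fun h => ⟨(dvd_mul_right a b).trans h, (dvd_mul_left b a).trans h⟩,
      fun h => hab.mul_dvd_of_dvd_of_dvd h.1 h.2⟩
  by_cases ha : a ∣ n <;> by_cases hb : b ∣ n <;> simp [dvdWeight_apply, hdvd, ha, hb]

/-- Hölder's closed form of the Ramanujan sum `c_q(n)`, as a function of `q`. -/
def ramanujanSum (n : ℕ) : ArithmeticFunction K :=
  ⟨fun q => (μ (q / q.gcd n) : K) * q.totient / (q / q.gcd n).totient, by simp⟩

theorem ramanujanSum_apply (n q : ℕ) :
    ramanujanSum n q = (μ (q / q.gcd n) : K) * q.totient / (q / q.gcd n).totient := rfl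

theorem isMultiplicative_ramanujanSum (n : ℕ) :
    (ramanujanSum n : ArithmeticFunction K).IsMultiplicative := by
  refine ⟨by simp [ramanujanSum_apply], fun {a b} hab => ?_⟩
  have hga : a.gcd n ∣ a := Nat.gcd_dvd_left a n
  have hgb : b.gcd n ∣ b := Nat.gcd_dvd_left b n
  have hgcd : (a * b).gcd n = a.gcd n * b.gcd n := hab.mul_gcd n
  have hcop : (a / a.gcd n).Coprime (b / b.gcd n) :=
    (hab.coprime_dvd_left (Nat.div_dvd_of_dvd hga)).coprime_dvd_right (Nat.div_dvd_of_dvd hgb)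
  rw [ramanujanSum_apply, ramanujanSum_apply, ramanujanSum_apply, hgcd,
    ← Nat.div_mul_div_comm hga hgb, isMultiplicative_moebius.map_mul_of_coprime hcop,
    Nat.totient_mul hab, Nat.totient_mul hcop]
  push_cast
  ring

variable [CharZero K]

theorem ramanujanSum_apply_prime_pow_succ (n : ℕ) {p : ℕ} (hp : p.Prime) (k : ℕ) :
    ramanujanSum n (p ^ (k + 1)) = dvdWeight n (p ^ (k + 1)) - (dvdWeight n (p ^ k) : K) := by
  obtain ⟨j, hj, hg⟩ := (Nat.dvd_prime_pow hp).mp (Nat.gcd_dvd_left (p ^ (k + 1)) n)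
  have hdvd {i : ℕ} (hi : i ≤ k + 1) : p ^ i ∣ n ↔ i ≤ j := by
    rw [← Nat.pow_dvd_pow_iff_le_right hp.one_lt, ← hg, Nat.dvd_gcd_iff,
      and_iff_right (pow_dvd_pow p hi)]
  have htot : ((p ^ (k + 1)).totient : K) = p ^ k * (p - 1) := by
    rw [Nat.totient_prime_pow_succ hp, Nat.cast_mul, Nat.cast_sub hp.one_le]
    push_cast
    ring
  have hp₁ : (p : K) - 1 ≠ 0 := sub_ne_zero.mpr (by exact_mod_cast hp.one_lt.ne')
  simp only [ramanujanSum_apply, dvdWeight_apply, hdvd le_rfl, hdvd k.le_succ]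
  rw [hg, Nat.pow_div hj hp.pos, htot]
  obtain hjk | rfl | rfl : j < k ∨ k = j ∨ k + 1 = j := by omega
  · rw [moebius_apply_prime_pow hp (by omega), if_neg (by omega), if_neg (by omega),
      if_neg (by omega)]
    simp
  · rw [Nat.sub_eq_of_eq_add (by omega : k + 1 = 1 + k), pow_one, moebius_apply_prime hp,
      Nat.totient_prime hp, Nat.cast_sub hp.one_le, if_neg (by omega), if_pos le_rfl]
    push_cast
    field_simp
    ring
  · rw [Nat.sub_self, pow_zero, moebius_apply_one, Nat.totient_one, if_pos le_rfl,
      if_pos k.le_succ]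
    push_cast
    ring

theorem ramanujanSum_eq_dvdWeight_mul_moebius (n : ℕ) :
    (ramanujanSum n : ArithmeticFunction K) = (dvdWeight n : ArithmeticFunction K) * μ := by
  have hmul : ((dvdWeight n : ArithmeticFunction K) * μ).IsMultiplicative :=
    (isMultiplicative_dvdWeight n).mul isMultiplicative_moebius.intCast
  rw [IsMultiplicative.eq_iff_eq_on_prime_powers _ (isMultiplicative_ramanujanSum n) _ hmul]
  rintro p (_ | k) hp
  · rw [pow_zero, (isMultiplicative_ramanujanSum n).map_one, hmul.map_one]
  · rw [mul_moebius_apply_prime_pow_succ _ hp, ramanujanSum_apply_prime_pow_succ n hp]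

theorem moebius_div_totient_eq_sum_divisors {q : ℕ} (hq : q ≠ 0) (n : ℕ) :
    (μ (q / q.gcd n) : K) / (q / q.gcd n).totient =
      ∑ d ∈ q.divisors, (if d ∣ n then (d : K) else 0) * μ (q / d) / q.totient := by
  have hφ : (q.totient : K) ≠ 0 := by
    exact_mod_cast (Nat.totient_pos.mpr (Nat.pos_of_ne_zero hq)).ne'
  rw [← Finset.sum_div, eq_div_iff hφ, div_mul_eq_mul_div, ← ramanujanSum_apply,
    ramanujanSum_eq_dvdWeight_mul_moebius, mul_apply, Nat.sum_divisorsAntidiagonal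
      (f := fun a b => dvdWeight n a * (μ : ArithmeticFunction K) b)]
  rfl

end Ramanujan

theorem moebius_div_totient_gcd_mul_of_coprime {K : Type*} [Field K] {q₀ q₁ n : ℕ}
    (h₀ : q₁.Coprime q₀) (hn : q₁.Coprime n) :
    (μ (q₀ * q₁ / (q₀ * q₁).gcd n) : K) / (q₀ * q₁ / (q₀ * q₁).gcd n).totient =
      μ q₁ / q₁.totient * (μ (q₀ / q₀.gcd n) / (q₀ / q₀.gcd n).totient) := by
  have hg : q₀.gcd n ∣ q₀ := Nat.gcd_dvd_left q₀ n
  have hcop : (q₀ / q₀.gcd n).Coprime q₁ := (h₀.coprime_dvd_right (Nat.div_dvd_of_dvd hg)).symm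
  rw [Nat.Coprime.gcd_mul_right_cancel q₀ hn, Nat.mul_div_right_comm hg,
    isMultiplicative_moebius.map_mul_of_coprime hcop, Nat.totient_mul hcop]
  push_cast
  ring

section EulerFactor

variable (s : ℂ)

def selfMulCpowNeg : ArithmeticFunction ℂ :=
  ⟨fun q => q * (q : ℂ) ^ (-s), by simp⟩

theorem selfMulCpowNeg_apply (q : ℕ) : selfMulCpowNeg s q = q * (q : ℂ) ^ (-s) := rfl

theorem isMultiplicative_selfMulCpowNeg : (selfMulCpowNeg s).IsMultiplicative := by
  refine ⟨by simp [selfMulCpowNeg_apply], fun {a b} _ => ?_⟩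
  simp only [selfMulCpowNeg_apply, Nat.cast_mul, Complex.natCast_mul_natCast_cpow]
  ring

def totientMulEulerFactor : ArithmeticFunction ℂ :=
  ⟨fun q => q.totient * (q : ℂ) ^ (-s) * ∏ p ∈ q.primeFactors, (1 - ((p : ℂ) ^ s - 1) / (p - 1)),
    by simp⟩

theorem totientMulEulerFactor_apply (q : ℕ) : totientMulEulerFactor s q =
    q.totient * (q : ℂ) ^ (-s) * ∏ p ∈ q.primeFactors, (1 - ((p : ℂ) ^ s - 1) / (p - 1)) := rfl

theorem isMultiplicative_totientMulEulerFactor : (totientMulEulerFactor s).IsMultiplicative := by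
  refine ⟨by simp [totientMulEulerFactor_apply], fun {a b} hab => ?_⟩
  rcases eq_or_ne a 0 with rfl | ha
  · simp [totientMulEulerFactor_apply]
  rcases eq_or_ne b 0 with rfl | hb
  · simp [totientMulEulerFactor_apply]
  simp only [totientMulEulerFactor_apply, Nat.primeFactors_mul ha hb,
    Finset.prod_union hab.disjoint_primeFactors, Nat.totient_mul hab, Nat.cast_mul,
    Complex.natCast_mul_natCast_cpow]
  ring

theorem selfMulCpowNeg_mul_moebius : selfMulCpowNeg s * μ = totientMulEulerFactor s := by
  have hmul : (selfMulCpowNeg s * μ).IsMultiplicative :=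
    (isMultiplicative_selfMulCpowNeg s).mul isMultiplicative_moebius.intCast
  rw [IsMultiplicative.eq_iff_eq_on_prime_powers _ hmul _
    (isMultiplicative_totientMulEulerFactor s)]
  rintro p (_ | k) hp
  · rw [pow_zero, hmul.map_one, (isMultiplicative_totientMulEulerFactor s).map_one]
  have hp₀ : (p : ℂ) ≠ 0 := by exact_mod_cast hp.ne_zero
  have hp₁ : (p : ℂ) - 1 ≠ 0 := sub_ne_zero.mpr (by exact_mod_cast hp.one_lt.ne')
  have hinv : (p : ℂ) ^ s * (p : ℂ) ^ (-s) = 1 := by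
    rw [Complex.cpow_neg, mul_inv_cancel₀ (Complex.cpow_ne_zero_iff.mpr (Or.inl hp₀))]
  rw [mul_moebius_apply_prime_pow_succ _ hp, selfMulCpowNeg_apply, selfMulCpowNeg_apply,
    totientMulEulerFactor_apply, Nat.primeFactors_prime_pow k.succ_ne_zero hp,
    Finset.prod_singleton, Nat.totient_prime_pow_succ hp, natCast_pow_cpow, natCast_pow_cpow,
    Nat.cast_mul, Nat.cast_sub hp.one_le]
  push_cast
  field_simp
  linear_combination (p : ℂ) ^ k * ((p : ℂ) ^ (-s)) ^ k * hinv

end EulerFactor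


theorem tsum_smoothNum_moebius_div_totient_mul_cpow {y : ℝ} {q : ℕ} {s : ℂ} (hy : 0 ≤ y)
    (hq : q ≠ 0) (hqy : SmoothNum y q) (hs : 0 < s.re) :
    ∑' n : ℕ, (if SmoothNum y n then
        (μ (q / q.gcd n) : ℂ) / (q / q.gcd n).totient * (n : ℂ) ^ (-s) else 0) =
      (q : ℂ) ^ (-s) * (∏ p ∈ q.primeFactors, (1 - ((p : ℂ) ^ s - 1) / (p - 1))) * zetaC s y := by
  have hφ : (q.totient : ℂ) ≠ 0 := by
    exact_mod_cast (Nat.totient_pos.mpr (Nat.pos_of_ne_zero hq)).ne'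
  have hterm (n : ℕ) : (if SmoothNum y n then
      (μ (q / q.gcd n) : ℂ) / (q / q.gcd n).totient * (n : ℂ) ^ (-s) else 0) =
      ∑ d ∈ q.divisors, d * μ (q / d) / q.totient *
        (if SmoothNum y n ∧ d ∣ n then (n : ℂ) ^ (-s) else 0) := by
    by_cases hn : SmoothNum y n
    · rw [if_pos hn, moebius_div_totient_eq_sum_divisors hq, Finset.sum_mul]
      refine Finset.sum_congr rfl fun d _ => ?_
      by_cases hd : d ∣ n <;> simp [hn, hd]
    · simp [hn]
  have hdivisor {d : ℕ} (hd : d ∈ q.divisors) :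
      ∑' n : ℕ, d * μ (q / d) / q.totient * (if SmoothNum y n ∧ d ∣ n then (n : ℂ) ^ (-s) else 0)
        = selfMulCpowNeg s d * μ (q / d) / q.totient * zetaC s y := by
    obtain ⟨hdq, -⟩ := Nat.mem_divisors.mp hd
    rw [tsum_mul_left, tsum_cpow_smoothNum_dvd (Nat.pos_of_mem_divisors hd).ne' (hqy.of_dvd hdq),
      selfMulCpowNeg_apply]
    ring
  rw [tsum_congr hterm, Summable.tsum_finsetSum fun d _ =>
      (summable_cpow_smoothNum_dvd hy hs d).mul_left _,
    Finset.sum_congr rfl fun d hd => hdivisor hd, ← Finset.sum_mul, ← Finset.sum_div]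
  have hsum : ∑ d ∈ q.divisors, selfMulCpowNeg s d * μ (q / d) = totientMulEulerFactor s q := by
    rw [← selfMulCpowNeg_mul_moebius, mul_apply,
      Nat.sum_divisorsAntidiagonal
        (f := fun a b => selfMulCpowNeg s a * (μ : ArithmeticFunction ℂ) b)]
    rfl
  rw [hsum, totientMulEulerFactor_apply]
  field_simp

theorem MPhi_mul_of_rough {Φ : ℝ → ℂ} {x y β : ℝ} {q₀ q₁ : ℕ} (hq₀ : SmoothNum y q₀)
    (hq₁ : ∀ p : ℕ, p.Prime → p ∣ q₁ → y < p) :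
    MPhi Φ x y (q₀ * q₁) β = μ q₁ / q₁.totient * MPhi Φ x y q₀ β := by
  rw [MPhi, MPhi, ← tsum_mul_left]
  congr 1 with n
  by_cases hn : SmoothNum y n
  · rw [if_pos hn, if_pos hn, moebius_div_totient_gcd_mul_of_coprime
      (coprime_of_rough_of_smoothNum hq₁ hq₀) (coprime_of_rough_of_smoothNum hq₁ hn)]
    ring
  · simp [hn]

/-- The Euler-product identity for `ζ(s;y,q₀)` and the reduction
`M_Φ(x,y;q,β) = (μ(q₁)/φ(q₁)) M_Φ(x,y;q₀,β)`. -/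
theorem zetaYQ_factorization :
    (∀ (y : ℝ) (q₀ : ℕ) (s : ℂ), 2 ≤ y → 1 ≤ q₀ → SmoothNum y q₀ → 0 < s.re →
      (∑' n : ℕ,
          if SmoothNum y n then
            ((ArithmeticFunction.moebius (q₀ / Nat.gcd q₀ n) : ℤ) : ℂ) /
              (Nat.totient (q₀ / Nat.gcd q₀ n) : ℂ) * (n : ℂ) ^ (-s)
          else 0) =
        (q₀ : ℂ) ^ (-s) *
          (∏ p ∈ q₀.primeFactors, (1 - ((p : ℂ) ^ s - 1) / ((p : ℂ) - 1))) *
          zetaC s y) ∧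
    ∀ (Φ : ℝ → ℂ) (x y β : ℝ) (q q₀ q₁ : ℕ), HasCompactSupport Φ →
      2 ≤ y → 1 ≤ q → q = q₀ * q₁ → SmoothNum y q₀ →
      (∀ p : ℕ, p.Prime → p ∣ q₁ → y < (p : ℝ)) →
      MPhi Φ x y q β =
        ((ArithmeticFunction.moebius q₁ : ℤ) : ℂ) / (Nat.totient q₁ : ℂ) *
          MPhi Φ x y q₀ β := by
  exact ⟨fun y q₀ s hy hq₀ hq₀y hs =>
      tsum_smoothNum_moebius_div_totient_mul_cpow (by linarith) (by omega) hq₀y hs,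
    fun Φ x y β q q₀ q₁ _ _ _ hq hq₀ hq₁ => hq ▸ MPhi_mul_of_rough hq₀ hq₁⟩

end

end Friable
end
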